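/- arXiv:1808.02346 — 3 statements merged into one kernel-verified Lean document; each statement's English description precedes it below -/
import Mathlib

section
/- The minimum over t ∈ [-1, 1) of the function t ↦ (1 - (2/π) arcsin t)/(1 - t) is attained and is strictly greater than 0.878, and strictly less than 0.879. -/
open Real Set

section helpers

lemma auxpos {f f' : ℝ → ℝ} (hd : ∀ y, HasDerivAt f (f' y) y) (h0 : f 0 = 0)
    (hf' : ∀ y, 0 ≤ y → 0 ≤ f' y) {x : ℝ} (hx : 0 ≤ x) : 0 ≤ f x := by
  have hm : MonotoneOn f (Ici 0) := by
    apply monotoneOn_of_deriv_nonneg (convex_Ici 0)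
      (fun y _ => (hd y).continuousAt.continuousWithinAt)
      (fun y _ => (hd y).differentiableAt.differentiableWithinAt)
    intro y hy
    rw [interior_Ici] at hy
    rw [(hd y).deriv]
    exact hf' y hy.le
  calc (0:ℝ) = f 0 := h0.symm
  _ ≤ f x := hm self_mem_Ici hx hx

lemma sin_lb3 {x : ℝ} (hx : 0 ≤ x) : x - x^3/6 ≤ Real.sin x := by
  have := auxpos (f := fun y => Real.sin y - (y - y^3/6)) (f' := fun y => Real.cos y - (1 - y^2/2))
    (fun y => by
      have h := (Real.hasDerivAt_sin y).sub ((hasDerivAt_id y).sub ((hasDerivAt_pow 3 y).div_const 6))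
      refine h.congr_deriv ?_
      norm_num; ring)
    (by norm_num) (fun y hy => by nlinarith [Real.one_sub_sq_div_two_le_cos (x := y)]) hx
  linarith [this]

lemma cos_ub4 {x : ℝ} (hx : 0 ≤ x) : Real.cos x ≤ 1 - x^2/2 + x^4/24 := by
  have := auxpos (f := fun y => 1 - y^2/2 + y^4/24 - Real.cos y)
    (f' := fun y => -(y - y^3/6) + Real.sin y)
    (fun y => by
      have h := (((hasDerivAt_const y (1:ℝ)).sub ((hasDerivAt_pow 2 y).div_const 2)).add
        ((hasDerivAt_pow 4 y).div_const 24)).sub (Real.hasDerivAt_cos y)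
      refine h.congr_deriv ?_
      norm_num; ring)
    (by norm_num) (fun y hy => by nlinarith [sin_lb3 hy]) hx
  linarith [this]

lemma sin_ub5 {x : ℝ} (hx : 0 ≤ x) : Real.sin x ≤ x - x^3/6 + x^5/120 := by
  have := auxpos (f := fun y => y - y^3/6 + y^5/120 - Real.sin y)
    (f' := fun y => (1 - y^2/2 + y^4/24) - Real.cos y)
    (fun y => by
      have h := (((hasDerivAt_id y).sub ((hasDerivAt_pow 3 y).div_const 6)).add
        ((hasDerivAt_pow 5 y).div_const 120)).sub (Real.hasDerivAt_sin y)
      refine h.congr_deriv ?_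
      norm_num; ring)
    (by norm_num) (fun y hy => by nlinarith [cos_ub4 hy]) hx
  linarith [this]

lemma cos_lb6 {x : ℝ} (hx : 0 ≤ x) : 1 - x^2/2 + x^4/24 - x^6/720 ≤ Real.cos x := by
  have := auxpos (f := fun y => Real.cos y - (1 - y^2/2 + y^4/24 - y^6/720))
    (f' := fun y => (y - y^3/6 + y^5/120) - Real.sin y)
    (fun y => by
      have h := (Real.hasDerivAt_cos y).sub ((((hasDerivAt_const y (1:ℝ)).sub
        ((hasDerivAt_pow 2 y).div_const 2)).add ((hasDerivAt_pow 4 y).div_const 24)).sub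
        ((hasDerivAt_pow 6 y).div_const 720))
      refine h.congr_deriv ?_
      norm_num; ring)
    (by norm_num) (fun y hy => by nlinarith [sin_ub5 hy]) hx
  linarith [this]

lemma sin_lb7 {x : ℝ} (hx : 0 ≤ x) : x - x^3/6 + x^5/120 - x^7/5040 ≤ Real.sin x := by
  have := auxpos (f := fun y => Real.sin y - (y - y^3/6 + y^5/120 - y^7/5040))
    (f' := fun y => Real.cos y - (1 - y^2/2 + y^4/24 - y^6/720))
    (fun y => by
      have h := (Real.hasDerivAt_sin y).sub ((((hasDerivAt_id y).sub
        ((hasDerivAt_pow 3 y).div_const 6)).add ((hasDerivAt_pow 5 y).div_const 120)).sub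
        ((hasDerivAt_pow 7 y).div_const 5040))
      refine h.congr_deriv ?_
      norm_num; ring)
    (by norm_num) (fun y hy => by nlinarith [cos_lb6 hy]) hx
  linarith [this]

-- numeric bounds at θ = 0.7585
lemma hs_lo : (0.68783:ℝ) ≤ Real.sin 0.7585 := by
  have h := sin_lb7 (x := 0.7585) (by norm_num)
  nlinarith [h]

lemma hs_hi : Real.sin 0.7585 ≤ (0.68787:ℝ) := by
  have h := sin_ub5 (x := 0.7585) (by norm_num)
  nlinarith [h]

lemma hc_lo : (0.72586:ℝ) ≤ Real.cos 0.7585 := by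
  have h := cos_lb6 (x := 0.7585) (by norm_num)
  nlinarith [h]

lemma hc_hi : Real.cos 0.7585 ≤ (0.72614:ℝ) := by
  have h := cos_ub4 (x := 0.7585) (by norm_num)
  nlinarith [h]

lemma hc_pos : (0:ℝ) < Real.cos 0.7585 := lt_of_lt_of_le (by norm_num) hc_lo

/-- tangent line bound for arcsin on [-1,0] -/
lemma tangent_bound {t : ℝ} (ht : t ∈ Icc (-1:ℝ) 0) :
    Real.arcsin t ≤ (1/Real.cos 0.7585) * t + (Real.sin 0.7585/Real.cos 0.7585 - 0.7585) := by
  have hpi := Real.pi_gt_d6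
  have hθ2 : (0.7585:ℝ) < π/2 := by linarith
  set φ : ℝ → ℝ := fun u => (1/Real.cos 0.7585) * Real.sin u + (Real.sin 0.7585/Real.cos 0.7585 - 0.7585) - u with hφ
  have hd : ∀ y, HasDerivAt φ ((1/Real.cos 0.7585) * Real.cos y - 1) y := fun y => by
    have h := (((Real.hasDerivAt_sin y).const_mul (1/Real.cos 0.7585)).add_const
      (Real.sin 0.7585/Real.cos 0.7585 - 0.7585)).sub (hasDerivAt_id y)
    exact h
  have hφθ : φ (-0.7585) = 0 := by
    simp only [hφ, Real.sin_neg]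
    ring
  have key : ∀ u ∈ Icc (-(π/2)) (0:ℝ), 0 ≤ φ u := by
    intro u hu
    rcases le_total u (-0.7585) with h | h
    · have anti : AntitoneOn φ (Icc (-(π/2)) (-0.7585)) := by
        apply antitoneOn_of_deriv_nonpos (convex_Icc _ _)
          (fun y _ => (hd y).continuousAt.continuousWithinAt)
          (fun y hy => (hd y).differentiableAt.differentiableWithinAt)
        intro y hy
        rw [interior_Icc] at hy
        rw [(hd y).deriv]
        have hy1 : (0.7585:ℝ) ≤ -y := by linarith [hy.2]
        have hy2 : -y ≤ π := by linarith [hy.1]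
        have hcc : Real.cos (-y) ≤ Real.cos 0.7585 :=
          Real.cos_le_cos_of_nonneg_of_le_pi (by norm_num) hy2 hy1
        rw [Real.cos_neg] at hcc
        have h3 := mul_le_mul_of_nonneg_left hcc (le_of_lt (one_div_pos.2 hc_pos))
        rw [one_div_mul_cancel (ne_of_gt hc_pos)] at h3
        linarith
      have := anti ⟨hu.1, h⟩ ⟨by linarith, by linarith⟩ h
      rw [hφθ] at this
      linarith
    · have mono : MonotoneOn φ (Icc (-(0.7585:ℝ)) 0) := by
        apply monotoneOn_of_deriv_nonneg (convex_Icc _ _)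
          (fun y _ => (hd y).continuousAt.continuousWithinAt)
          (fun y hy => (hd y).differentiableAt.differentiableWithinAt)
        intro y hy
        rw [interior_Icc] at hy
        rw [(hd y).deriv]
        have hy1 : 0 ≤ -y := by linarith [hy.2]
        have hy2 : -y ≤ 0.7585 := by linarith [hy.1]
        have hcc : Real.cos 0.7585 ≤ Real.cos (-y) :=
          Real.cos_le_cos_of_nonneg_of_le_pi hy1 (by linarith) hy2
        rw [Real.cos_neg] at hcc
        have h3 := mul_le_mul_of_nonneg_left hcc (le_of_lt (one_div_pos.2 hc_pos))
        rw [one_div_mul_cancel (ne_of_gt hc_pos)] at h3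
        linarith
      have := mono ⟨le_refl _, by norm_num⟩ ⟨h, hu.2⟩ h
      rw [hφθ] at this
      linarith
  have hu : Real.arcsin t ∈ Icc (-(π/2)) (0:ℝ) :=
    ⟨Real.neg_pi_div_two_le_arcsin t, Real.arcsin_nonpos.2 ht.2⟩
  have h := key _ hu
  simp only [hφ] at h
  rw [Real.sin_arcsin ht.1 (le_trans ht.2 zero_le_one)] at h
  linarith

/-- the lower bound on [-1,0] -/
lemma lower_bound {t : ℝ} (ht : t ∈ Icc (-1:ℝ) 0) :
    (0.878:ℝ) < (1 - (2 / π) * Real.arcsin t) / (1 - t) := by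
  have hpi := Real.pi_gt_d6
  have hpi' := Real.pi_lt_d6
  have hπ : (0:ℝ) < π := Real.pi_pos
  set c := Real.cos 0.7585 with hcdef
  set s := Real.sin 0.7585 with hsdef
  have h1t : (0:ℝ) < 1 - t := by linarith [ht.2]
  rw [lt_div_iff₀ h1t]
  have ha := tangent_bound ht
  have h2π : (0:ℝ) < 2/π := by positivity
  have hmul : 2/π * Real.arcsin t ≤ 2/π * ((1/c) * t + (s/c - 0.7585)) :=
    mul_le_mul_of_nonneg_left ha (le_of_lt h2π)
  have hq_lo : (2.28035:ℝ) ≤ π * c := by nlinarith [hc_lo, hc_pos]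
  have hq_hi : π * c ≤ (2.28124:ℝ) := by nlinarith [hc_hi, hc_pos]
  have key : 0.878 * (1-t) * (π*c) < π*c - 2*t - 2*s + 2*0.7585*c := by
    nlinarith [mul_nonneg (neg_nonneg.2 ht.2) (sub_nonneg.2 hq_hi), ht.1, ht.2, hs_hi, hc_lo]
  have heq : 1 - 2/π * ((1/c) * t + (s/c - 0.7585))
      = (π*c - 2*t - 2*s + 2*0.7585*c) / (π*c) := by
    have hc0 : c ≠ 0 := by rw [hcdef]; exact ne_of_gt hc_pos
    have hπ0 : π ≠ 0 := ne_of_gt hπ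
    field_simp
    ring
  have hfin : 0.878 * (1-t) < 1 - 2/π * ((1/c) * t + (s/c - 0.7585)) := by
    rw [heq, lt_div_iff₀ (by positivity : (0:ℝ) < π*c)]
    exact key
  linarith

/-- value at the witness point -/
lemma upper_witness :
    (1 - (2 / π) * Real.arcsin (-Real.sin 0.7585)) / (1 - (-Real.sin 0.7585)) < (0.879:ℝ) := by
  have hpi := Real.pi_gt_d6
  have hπ : (0:ℝ) < π := Real.pi_pos
  have hrw : Real.arcsin (-Real.sin 0.7585) = -0.7585 := by
    rw [Real.arcsin_neg, Real.arcsin_sin (by linarith) (by linarith)]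
  rw [hrw]
  have hs0 : (0:ℝ) ≤ Real.sin 0.7585 := le_trans (by norm_num) hs_lo
  rw [div_lt_iff₀ (by linarith : (0:ℝ) < 1 - -Real.sin 0.7585)]
  have h2 : 2/π * (0.7585:ℝ) < 2/3.141592 * 0.7585 := by
    apply mul_lt_mul_of_pos_right _ (by norm_num)
    apply div_lt_div_of_pos_left (by norm_num) (by norm_num) hpi
  nlinarith [hs_lo]

/-- on [0,1) the function is at least 1 -/
lemma right_ge_one {s : ℝ} (h0 : 0 ≤ s) (h1 : s < 1) :
    (1:ℝ) ≤ (1 - (2 / π) * Real.arcsin s) / (1 - s) := by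
  have hπ : (0:ℝ) < π := Real.pi_pos
  have harc : Real.arcsin s ≤ π/2 * s := by
    have h := Real.le_sin_mul h0 h1.le
    have h2 : Real.arcsin s ≤ Real.arcsin (Real.sin (π/2 * s)) := Real.monotone_arcsin h
    rwa [Real.arcsin_sin (by nlinarith) (by nlinarith)] at h2
  rw [le_div_iff₀ (by linarith : (0:ℝ) < 1 - s), one_mul]
  have : 2/π * Real.arcsin s ≤ 2/π * (π/2 * s) :=
    mul_le_mul_of_nonneg_left harc (by positivity)
  have heq : 2/π * (π/2 * s) = s := by field_simp
  linarith [heq ▸ this]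

end helpers

theorem stmt_1 :
    ∃ t ∈ Set.Ico (-1 : ℝ) 1,
      (∀ s ∈ Set.Ico (-1 : ℝ) 1,
        (1 - (2 / π) * Real.arcsin t) / (1 - t) ≤ (1 - (2 / π) * Real.arcsin s) / (1 - s)) ∧
      0.878 < (1 - (2 / π) * Real.arcsin t) / (1 - t) ∧
      (1 - (2 / π) * Real.arcsin t) / (1 - t) < 0.879 := by
  set f : ℝ → ℝ := fun s => (1 - (2 / π) * Real.arcsin s) / (1 - s) with hf
  have hcont : ContinuousOn f (Icc (-1:ℝ) 0) := by
    apply ContinuousOn.div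
    · exact (continuous_const.sub (continuous_const.mul Real.continuous_arcsin)).continuousOn
    · exact (continuous_const.sub continuous_id).continuousOn
    · intro x hx hEq
      simp only [id_eq, sub_eq_zero] at hEq
      rw [← hEq] at hx
      linarith [hx.2]
  obtain ⟨t, htK, hmin⟩ := isCompact_Icc.exists_isMinOn (⟨-1, by norm_num⟩ : (Icc (-1:ℝ) 0).Nonempty) hcont
  have hmin' : ∀ s ∈ Icc (-1:ℝ) 0, f t ≤ f s := fun s hs => isMinOn_iff.1 hmin s hs
  have ht0 : -Real.sin 0.7585 ∈ Icc (-1:ℝ) 0 := by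
    constructor
    · linarith [Real.sin_le_one (0.7585:ℝ)]
    · have : (0:ℝ) ≤ Real.sin 0.7585 := le_trans (by norm_num) hs_lo
      linarith
  have hup : f t < 0.879 := lt_of_le_of_lt (hmin' _ ht0) upper_witness
  refine ⟨t, ⟨htK.1, lt_of_le_of_lt htK.2 one_pos⟩, ?_, lower_bound htK, hup⟩
  intro s hs
  rcases le_or_gt s 0 with h | h
  · exact hmin' s ⟨hs.1, h⟩
  · exact le_of_lt (calc f t < 0.879 := hup
      _ ≤ 1 := by norm_num
      _ ≤ f s := right_ge_one h.le hs.2)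
end

section
/- Let V be a nonempty finite set, A : V × V → ℝ a nonnegative matrix, and suppose K : [-1,1] → ℝ and α ∈ ℝ satisfy: (i) for every f : V → S^{n-1}, the matrix (K(f(x)·f(y)))_{x,y} is a convex combination of matrices of the form (g(x)g(y))_{x,y} with g : V → {-1,1}; and (ii) 1 - K(t) ≥ α(1 - t) for all t ∈ [-1,1]. Then sdp₁(A) ≥ α · sdp_n(A), where sdp_m(A) = max over f : V → S^{m-1} of Σ_{x,y} A(x,y)(1 - f(x)·f(y)). -/
open scoped RealInnerProductSpace

/-- The maximum (as a supremum) of `∑ A(x,y)(1 - f(x)·f(y))` over all maps `f`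
from `V` to the unit sphere in `ℝ^m`. -/
noncomputable def sdp {V : Type*} [Fintype V] (m : ℕ) (A : V → V → ℝ) : ℝ :=
  ⨆ f : V → Metric.sphere (0 : EuclideanSpace ℝ (Fin m)) 1,
    ∑ x : V, ∑ y : V,
      A x y * (1 - ⟪(f x : EuclideanSpace ℝ (Fin m)), (f y : EuclideanSpace ℝ (Fin m))⟫)

/-- The cut polytope `CUT(V)`: convex hull of the matrices `(g(x)g(y))` with
`g : V → {-1,1}`. -/
def cutPolytope (V : Type*) [Fintype V] : Set (V → V → ℝ) :=
  convexHull ℝ {M | ∃ g : V → ℝ, (∀ x, g x = 1 ∨ g x = -1) ∧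
    M = fun x y => g x * g y}

lemma sphere_norm_one {m : ℕ} (v : Metric.sphere (0 : EuclideanSpace ℝ (Fin m)) 1) :
    ‖(v : EuclideanSpace ℝ (Fin m))‖ = 1 := by
  have := v.2
  simpa [mem_sphere_zero_iff_norm] using this

lemma sdp_bdd {V : Type*} [Fintype V] (m : ℕ) (A : V → V → ℝ) (hA : ∀ x y, 0 ≤ A x y) :
    BddAbove (Set.range fun f : V → Metric.sphere (0 : EuclideanSpace ℝ (Fin m)) 1 =>
      ∑ x : V, ∑ y : V,
        A x y * (1 - ⟪(f x : EuclideanSpace ℝ (Fin m)), (f y : EuclideanSpace ℝ (Fin m))⟫)) := by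
  refine ⟨∑ x : V, ∑ y : V, 2 * A x y, ?_⟩
  rintro _ ⟨f, rfl⟩
  refine Finset.sum_le_sum fun x _ => Finset.sum_le_sum fun y _ => ?_
  have h := abs_real_inner_le_norm ((f x : EuclideanSpace ℝ (Fin m))) ((f y : EuclideanSpace ℝ (Fin m)))
  rw [sphere_norm_one, sphere_norm_one] at h
  rw [mul_one] at h
  have h2 := abs_le.mp h
  nlinarith [hA x y, h2.1, h2.2]

theorem stmt_9 {V : Type*} [Fintype V] [Nonempty V] (n : ℕ) (hn : 1 ≤ n)
    (A : V → V → ℝ) (hA : ∀ x y, 0 ≤ A x y)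
    (K : ℝ → ℝ) (α : ℝ)
    (hKcut : ∀ f : V → EuclideanSpace ℝ (Fin n), (∀ x, ‖f x‖ = 1) →
      (fun x y => K ⟪f x, f y⟫) ∈ cutPolytope V)
    (hKα : ∀ t ∈ Set.Icc (-1 : ℝ) 1, 1 - K t ≥ α * (1 - t)) :
    sdp 1 A ≥ α * sdp n A := by
  classical
  -- unit vectors
  have hv1 : ‖(EuclideanSpace.single (0 : Fin 1) (1 : ℝ) : EuclideanSpace ℝ (Fin 1))‖ = 1 := by
    simp [EuclideanSpace.norm_single]
  set v1 : EuclideanSpace ℝ (Fin 1) := EuclideanSpace.single (0 : Fin 1) (1 : ℝ)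
  have hvn : ‖(EuclideanSpace.single (⟨0, hn⟩ : Fin n) (1 : ℝ) : EuclideanSpace ℝ (Fin n))‖ = 1 := by
    simp [EuclideanSpace.norm_single]
  set vn : EuclideanSpace ℝ (Fin n) := EuclideanSpace.single (⟨0, hn⟩ : Fin n) (1 : ℝ)
  have hne1 : Nonempty (Metric.sphere (0 : EuclideanSpace ℝ (Fin 1)) 1) :=
    ⟨⟨v1, by simp [mem_sphere_zero_iff_norm, hv1]⟩⟩
  have hnen : Nonempty (Metric.sphere (0 : EuclideanSpace ℝ (Fin n)) 1) :=
    ⟨⟨vn, by simp [mem_sphere_zero_iff_norm, hvn]⟩⟩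
  have hbdd1 := sdp_bdd (V := V) 1 A hA
  have hbddn := sdp_bdd (V := V) n A hA
  -- constant maps give value 0, so sdp ≥ 0
  have hzero : ∀ (m : ℕ) (w : Metric.sphere (0 : EuclideanSpace ℝ (Fin m)) 1),
      (∑ x : V, ∑ y : V, A x y * (1 - ⟪((fun _ : V => w) x : EuclideanSpace ℝ (Fin m)),
        ((fun _ : V => w) y : EuclideanSpace ℝ (Fin m))⟫)) = 0 := by
    intro m w
    have : ⟪(w : EuclideanSpace ℝ (Fin m)), (w : EuclideanSpace ℝ (Fin m))⟫ = 1 := by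
      rw [real_inner_self_eq_norm_sq, sphere_norm_one]; norm_num
    simp [this]
  have hsdp1_nonneg : 0 ≤ sdp 1 A := by
    obtain ⟨w⟩ := hne1
    calc (0:ℝ) = _ := (hzero 1 w).symm
    _ ≤ sdp 1 A := le_ciSup hbdd1 (fun _ => w)
  have hsdpn_nonneg : 0 ≤ sdp n A := by
    obtain ⟨w⟩ := hnen
    calc (0:ℝ) = _ := (hzero n w).symm
    _ ≤ sdp n A := le_ciSup hbddn (fun _ => w)
  -- cut polytope bound: any M in the cut polytope has ∑ A (1 - M) ≤ sdp 1 A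
  have hcut : ∀ M ∈ cutPolytope V, ∑ x : V, ∑ y : V, A x y * (1 - M x y) ≤ sdp 1 A := by
    intro M hM
    have hlin : IsLinearMap ℝ (fun M : V → V → ℝ => ∑ x : V, ∑ y : V, A x y * M x y) := by
      constructor
      · intro M N
        simp [mul_add, Finset.sum_add_distrib]
      · intro c M
        simp only [Pi.smul_apply, smul_eq_mul, Finset.mul_sum]
        congr 1; ext x; congr 1; ext y; ring
    have hconv : Convex ℝ {M : V → V → ℝ |
        ∑ x : V, ∑ y : V, A x y * (1 - M x y) ≤ sdp 1 A} := by
      have h := convex_halfSpace_ge hlin ((∑ x : V, ∑ y : V, A x y) - sdp 1 A)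
      convert h using 1
      case e'_6 => rfl
      ext M
      simp only [Set.mem_setOf_eq, mul_sub, mul_one, Finset.sum_sub_distrib]
      constructor <;> intro h' <;> linarith
    refine convexHull_min ?_ hconv hM
    rintro _ ⟨g, hg, rfl⟩
    -- build the 1-dimensional embedding
    have hgnorm : ∀ x, ‖g x • v1‖ = 1 := by
      intro x
      rw [norm_smul, hv1, mul_one]
      rcases hg x with h | h <;> simp [h]
    set f1 : V → Metric.sphere (0 : EuclideanSpace ℝ (Fin 1)) 1 :=
      fun x => ⟨g x • v1, by simp [mem_sphere_zero_iff_norm, hgnorm]⟩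
    have hinner : ∀ x y, ⟪(f1 x : EuclideanSpace ℝ (Fin 1)), (f1 y : EuclideanSpace ℝ (Fin 1))⟫
        = g x * g y := by
      intro x y
      have hv : ⟪v1, v1⟫ = 1 := by
        rw [real_inner_self_eq_norm_sq, hv1]; norm_num
      simp only [f1, real_inner_smul_left, real_inner_smul_right, hv]
      ring
    have : (∑ x : V, ∑ y : V, A x y * (1 - g x * g y))
        = ∑ x : V, ∑ y : V, A x y * (1 - ⟪(f1 x : EuclideanSpace ℝ (Fin 1)),
            (f1 y : EuclideanSpace ℝ (Fin 1))⟫) := by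
      refine Finset.sum_congr rfl fun x _ => Finset.sum_congr rfl fun y _ => ?_
      rw [hinner]
    simp only [Set.mem_setOf_eq]
    rw [this]
    exact le_ciSup hbdd1 f1
  -- key inequality for every n-dimensional embedding
  have key : ∀ f : V → Metric.sphere (0 : EuclideanSpace ℝ (Fin n)) 1,
      α * (∑ x : V, ∑ y : V, A x y * (1 - ⟪(f x : EuclideanSpace ℝ (Fin n)),
        (f y : EuclideanSpace ℝ (Fin n))⟫)) ≤ sdp 1 A := by
    intro f
    set F : V → EuclideanSpace ℝ (Fin n) := fun x => (f x : EuclideanSpace ℝ (Fin n))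
    have hF : ∀ x, ‖F x‖ = 1 := fun x => sphere_norm_one (f x)
    have hIcc : ∀ x y, ⟪F x, F y⟫ ∈ Set.Icc (-1 : ℝ) 1 := by
      intro x y
      have h := abs_real_inner_le_norm (F x) (F y)
      rw [hF, hF] at h
      rw [mul_one] at h
      exact abs_le.mp h
    have h1 : α * (∑ x : V, ∑ y : V, A x y * (1 - ⟪F x, F y⟫))
        ≤ ∑ x : V, ∑ y : V, A x y * (1 - K ⟪F x, F y⟫) := by
      rw [Finset.mul_sum]
      refine Finset.sum_le_sum fun x _ => ?_
      rw [Finset.mul_sum]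
      refine Finset.sum_le_sum fun y _ => ?_
      have := hKα _ (hIcc x y)
      nlinarith [hA x y]
    have h2 := hcut _ (hKcut F hF)
    exact h1.trans h2
  rcases le_or_gt α 0 with hα | hα
  · exact le_trans (mul_nonpos_of_nonpos_of_nonneg hα hsdpn_nonneg) hsdp1_nonneg
  · rw [ge_iff_le, sdp, Real.mul_iSup_of_nonneg hα.le]
    exact ciSup_le key
end

section
/- Suppose K : [-1,1] → ℝ has an expansion K(t) = Σ_{k=0}^∞ a_k P_k(t) with a_k ≥ 0, Σ a_k = 1, where each P_k satisfies |P_k(t)| ≤ 1 on [-1,1], P_k(1) = 1, and P_1(t) = t. Assume 1 - K(-1) ≥ 2α, and assume there is δ ∈ (0,1] with P_k(t) ≤ t for all k ≥ 2 and t ∈ [1-δ, 1]. Then 1 - K(t) ≥ α(1 - t) for all t ∈ [1-δ, 1]. -/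
set_option maxHeartbeats 1000000


theorem stmt_13 (K : ℝ → ℝ) (a : ℕ → ℝ) (P : ℕ → ℝ → ℝ) (α δ : ℝ)
    (ha : ∀ k, 0 ≤ a k) (haSum : Summable a) (ha1 : ∑' k, a k = 1)
    (hK : ∀ t ∈ Set.Icc (-1 : ℝ) 1, K t = ∑' k, a k * P k t)
    (hPbd : ∀ k, ∀ t ∈ Set.Icc (-1 : ℝ) 1, |P k t| ≤ 1)
    (hPone : ∀ k, P k 1 = 1)
    (hP0 : ∀ t ∈ Set.Icc (-1 : ℝ) 1, P 0 t = 1)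
    (hP1 : ∀ t ∈ Set.Icc (-1 : ℝ) 1, P 1 t = t)
    (hKneg : 1 - K (-1) ≥ 2 * α)
    (hδ : 0 < δ) (hδ1 : δ ≤ 1)
    (hPk : ∀ k ≥ 2, ∀ t ∈ Set.Icc (1 - δ) 1, P k t ≤ t) :
    ∀ t ∈ Set.Icc (1 - δ) 1, 1 - K t ≥ α * (1 - t) := by
  have hsum : ∀ s ∈ Set.Icc (-1:ℝ) 1, Summable (fun k => a k * P k s) := by
    intro s hs
    apply Summable.of_norm_bounded haSum
    intro k
    have h1 := hPbd k s hs
    have h2 := ha k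
    rw [Real.norm_eq_abs, abs_mul, abs_of_nonneg h2]
    nlinarith [abs_nonneg (P k s)]
  have hshift : Summable (fun k => a (k + 1)) := (summable_nat_add_iff 1).mpr haSum
  have hsum' : ∀ s ∈ Set.Icc (-1:ℝ) 1, Summable (fun k => a (k + 1) * P (k + 1) s) := by
    intro s hs
    apply Summable.of_norm_bounded hshift
    intro k
    have h1 := hPbd (k + 1) s hs
    have h2 := ha (k + 1)
    rw [Real.norm_eq_abs, abs_mul, abs_of_nonneg h2]
    nlinarith [abs_nonneg (P (k + 1) s)]
  have htail : ∑' k, a (k + 1) = 1 - a 0 := by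
    have := Summable.tsum_eq_zero_add haSum
    rw [ha1] at this; linarith
  have hneg : (-1:ℝ) ∈ Set.Icc (-1:ℝ) 1 := by constructor <;> norm_num
  -- lower bound on K(-1)
  have hKneg' : K (-1) ≥ 2 * a 0 - 1 := by
    have hsplit := Summable.tsum_eq_zero_add (hsum _ hneg)
    have hle : ∑' k, a (k + 1) * (-1:ℝ) ≤ ∑' k, a (k + 1) * P (k + 1) (-1) := by
      apply Summable.tsum_le_tsum _ (hshift.mul_right _) (hsum' _ hneg)
      · intro k
        have h1 := hPbd (k + 1) (-1) hneg
        have h2 := ha (k + 1)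
        have := neg_abs_le (P (k + 1) (-1))
        nlinarith
    rw [tsum_mul_right, htail] at hle
    rw [hK _ hneg, hsplit, hP0 _ hneg]
    linarith
  have hα : α ≤ 1 - a 0 := by linarith
  intro t ht
  have ht' : t ∈ Set.Icc (-1:ℝ) 1 := ⟨by linarith [ht.1], ht.2⟩
  -- upper bound on K(t)
  have hKt : K t ≤ a 0 + (1 - a 0) * t := by
    have hsplit := Summable.tsum_eq_zero_add (hsum _ ht')
    have hle : ∑' k, a (k + 1) * P (k + 1) t ≤ ∑' k, a (k + 1) * t := by
      apply Summable.tsum_le_tsum _ (hsum' _ ht') (hshift.mul_right _)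
      intro k
      have h2 := ha (k + 1)
      have hP : P (k + 1) t ≤ t := by
        match k with
        | 0 => rw [hP1 _ ht']
        | (m + 1) => exact hPk (m + 2) (by omega) t ht
      nlinarith
    rw [tsum_mul_right, htail] at hle
    rw [hK _ ht', hsplit, hP0 _ ht']
    linarith
  have ht1 : t ≤ 1 := ht.2
  nlinarith
end
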